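/- Let τ : (0,1) → ℝ be the inverse of μ and ρ(z,x) = e^{zτ(x)}τ(x)/(e^{τ(x)}−1) (with ρ(z,1/2) = 1). Define dB_x := ρ(z,x)dz for x ∈ (0,1), dB_0 := δ_0, and dB_1 := δ_1. Then the map B : [0,1] → M([0,1]), x ↦ dB_x, is a Bernstein measure on [0,1]: it is a continuous section of the barycenter map, for every f ∈ C([0,1]) the function B(f)(x) = ∫_0^1 f(z) dB_x(z) is continuous on [0,1] and smooth on (0,1), and ∇B(f)(x) = ∫_0^1 f(z) K(x)(z−x) dB_x(z) for x ∈ (0,1) with defining matrix (function) K(x) = τ'(x). -/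

import Mathlib

open Set MeasureTheory Filter
open scoped Topology ENNReal

noncomputable section

/-- `μ(τ) = (Todd(τ) − 1)/τ = 1/(1 − e^{−τ}) − 1/τ` for `τ ≠ 0`, `μ(0) = 1/2`. -/
def toddMu (t : ℝ) : ℝ :=
  if t = 0 then 1 / 2 else 1 / (1 - Real.exp (-t)) - 1 / t

/-- `ρ(z,x) = e^{zτ(x)} τ(x) / (e^{τ(x)} − 1)`, with the limiting value `1` when `τ(x) = 0`
(i.e. at `x = 1/2`). -/
def rhoFun (tau : ℝ → ℝ) (z x : ℝ) : ℝ :=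
  if tau x = 0 then 1 else Real.exp (z * tau x) * tau x / (Real.exp (tau x) - 1)

/-- The measure `dB_x = ρ(z,x) dz` on `[0,1]` for `x ∈ (0,1)`, with `dB_0 = δ_0`, `dB_1 = δ_1`. -/
def toddMeas (tau : ℝ → ℝ) (x : ℝ) : Measure ℝ :=
  if x = 0 then Measure.dirac 0
  else if x = 1 then Measure.dirac 1
  else (volume.restrict (Set.Icc (0:ℝ) 1)).withDensity fun z => ENNReal.ofReal (rhoFun tau z x)

open scoped NNReal Nat

section BernsteinAux

variable {E : Type*} [NormedAddCommGroup E] [NormedSpace ℝ E] [CompleteSpace E]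

/-- `Lint f t = ∫_0^1 e^{z t} • f z dz`. -/
def Lint (f : ℝ → E) (t : ℝ) : E := ∫ z in (0:ℝ)..1, Real.exp (z * t) • f z

lemma real_exp_tsum (u : ℝ) : Real.exp u = ∑' n : ℕ, u ^ n / n ! := by
  rw [Real.exp_eq_exp_ℝ, NormedSpace.exp_eq_tsum_div]

lemma continuous_exp_smul {f : ℝ → E} (hf : Continuous f) (t : ℝ) :
    Continuous fun z => Real.exp (z * t) • f z :=
  (Real.continuous_exp.comp (continuous_id.mul continuous_const)).smul hf

lemma exp_mul_le {z t : ℝ} (hz : z ∈ Icc (0:ℝ) 1) : Real.exp (z * t) ≤ Real.exp |t| := by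
  apply Real.exp_le_exp.2
  have h1 : z * t ≤ z * |t| := mul_le_mul_of_nonneg_left (le_abs_self t) hz.1
  have h2 : z * |t| ≤ 1 * |t| := mul_le_mul_of_nonneg_right hz.2 (abs_nonneg t)
  linarith

lemma norm_Lint_le {f : ℝ → E} (hf : Continuous f) {C : ℝ} (t : ℝ)
    (hC : ∀ z ∈ Icc (0:ℝ) 1, ‖f z‖ ≤ C) : ‖Lint f t‖ ≤ Real.exp |t| * C := by
  have h1 : ‖Lint f t‖ ≤ ∫ z in (0:ℝ)..1, ‖Real.exp (z * t) • f z‖ :=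
    intervalIntegral.norm_integral_le_integral_norm zero_le_one
  refine h1.trans ?_
  have h2 : (∫ z in (0:ℝ)..1, ‖Real.exp (z * t) • f z‖)
      ≤ ∫ _z in (0:ℝ)..1, Real.exp |t| * C := by
    apply intervalIntegral.integral_mono_on zero_le_one
    · exact ((continuous_exp_smul hf t).norm).intervalIntegrable _ _
    · exact intervalIntegrable_const
    · intro z hz
      rw [norm_smul, Real.norm_eq_abs, Real.abs_exp]
      have h3 : ‖f z‖ ≤ C := hC z hz
      have h4 : (0:ℝ) ≤ ‖f z‖ := norm_nonneg _
      nlinarith [exp_mul_le (t := t) hz, Real.exp_pos (z * t), Real.exp_pos |t|]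
  simpa using h2

set_option linter.unusedSectionVars false

/-- Taylor series of `Lint f` at `t₀`. -/
def Lseries (f : ℝ → E) (t₀ : ℝ) : FormalMultilinearSeries ℝ ℝ E :=
  fun n => ContinuousMultilinearMap.mkPiRing ℝ (Fin n)
    (((Nat.factorial n : ℝ))⁻¹ • Lint (fun z => z ^ n • f z) t₀)

lemma hasSum_Lint {f : ℝ → E} (hf : Continuous f) (t₀ y : ℝ) :
    HasSum (fun n : ℕ => (y ^ n * ((Nat.factorial n : ℝ))⁻¹) • Lint (fun z => z ^ n • f z) t₀)
      (Lint f (t₀ + y)) := by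
  obtain ⟨C, hC⟩ := (isCompact_Icc (a := (0:ℝ)) (b := 1)).exists_bound_of_continuousOn
    (f := f) hf.continuousOn
  have hC0 : 0 ≤ C := le_trans (norm_nonneg (f 0)) (hC 0 (by norm_num))
  set F : ℕ → ℝ → E := fun n z =>
    ((y ^ n * ((Nat.factorial n : ℝ))⁻¹) * (z ^ n * Real.exp (z * t₀))) • f z with hF
  have hFc : ∀ n, Continuous (F n) := fun n =>
    (continuous_const.mul ((continuous_pow n).mul
      (Real.continuous_exp.comp (continuous_id.mul continuous_const)))).smul hf
  have hFint : ∀ n, IntegrableOn (F n) (Ioc (0:ℝ) 1) := fun n =>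
    (hFc n).integrableOn_Ioc
  have hFbound : ∀ n, ∀ z ∈ Ioc (0:ℝ) 1,
      ‖F n z‖ ≤ (|y| ^ n * ((Nat.factorial n : ℝ))⁻¹) * (Real.exp |t₀| * C) := by
    intro n z hz
    have hz' : z ∈ Icc (0:ℝ) 1 := Ioc_subset_Icc_self hz
    have h1 : ‖F n z‖ = |y ^ n * ((Nat.factorial n : ℝ))⁻¹| * (|z ^ n * Real.exp (z * t₀)| * ‖f z‖) := by
      rw [hF]; rw [norm_smul, Real.norm_eq_abs, abs_mul, mul_assoc]
    rw [h1]
    have hzn : |z ^ n| ≤ 1 := by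
      rw [abs_pow]
      exact pow_le_one₀ (abs_nonneg z) (abs_le.2 ⟨by linarith [hz'.1], hz'.2⟩)
    have he : Real.exp (z * t₀) ≤ Real.exp |t₀| := exp_mul_le hz'
    have h2 : |z ^ n * Real.exp (z * t₀)| ≤ Real.exp |t₀| := by
      rw [abs_mul, Real.abs_exp]
      nlinarith [abs_nonneg (z ^ n), Real.exp_pos (z * t₀), Real.exp_pos |t₀|]
    have h3 : |y ^ n * ((Nat.factorial n : ℝ))⁻¹| = |y| ^ n * ((Nat.factorial n : ℝ))⁻¹ := by
      rw [abs_mul, abs_pow, abs_of_nonneg (by positivity : (0:ℝ) ≤ ((Nat.factorial n : ℝ))⁻¹)]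
    rw [h3]
    have h4 : |z ^ n * Real.exp (z * t₀)| * ‖f z‖ ≤ Real.exp |t₀| * C := by
      have := hC z hz'
      nlinarith [abs_nonneg (z ^ n * Real.exp (z * t₀)), norm_nonneg (f z), Real.exp_pos |t₀|]
    have h5 : (0:ℝ) ≤ |y| ^ n * ((Nat.factorial n : ℝ))⁻¹ := by positivity
    exact mul_le_mul_of_nonneg_left h4 h5
  have hsum : Summable fun n => ∫ z in Ioc (0:ℝ) 1, ‖F n z‖ := by
    apply Summable.of_nonneg_of_le (fun n => by positivity)
      (fun n => ?_) (((Real.summable_pow_div_factorial |y|).mul_right (Real.exp |t₀| * C)))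
    have : (∫ z in Ioc (0:ℝ) 1, ‖F n z‖)
        ≤ ∫ _z in Ioc (0:ℝ) 1, (|y| ^ n * ((Nat.factorial n : ℝ))⁻¹) * (Real.exp |t₀| * C) := by
      apply setIntegral_mono_on ((hFc n).norm.integrableOn_Ioc) (integrableOn_const (by simp) enorm_ne_top)
        measurableSet_Ioc
      exact hFbound n
    refine this.trans ?_
    rw [setIntegral_const, Real.volume_real_Ioc]
    simp [div_eq_mul_inv]
  have key := MeasureTheory.hasSum_integral_of_summable_integral_norm
    (μ := volume.restrict (Ioc (0:ℝ) 1)) (F := F) (fun n => hFint n) hsum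
  -- identify the terms
  have hterm : ∀ n, (∫ z in Ioc (0:ℝ) 1, F n z)
      = (y ^ n * ((Nat.factorial n : ℝ))⁻¹) • Lint (fun z => z ^ n • f z) t₀ := by
    intro n
    rw [Lint, intervalIntegral.integral_of_le zero_le_one, ← integral_smul]
    apply setIntegral_congr_fun measurableSet_Ioc
    intro z _
    rw [hF]
    simp only [smul_smul]
    congr 1
    ring
  have htsum : ∀ z ∈ Ioc (0:ℝ) 1, (∑' n, F n z) = Real.exp (z * (t₀ + y)) • f z := by
    intro z _
    rw [hF]
    have hs1 : Summable fun n : ℕ => (y ^ n * ((Nat.factorial n : ℝ))⁻¹) * (z ^ n * Real.exp (z * t₀)) := by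
      have h := (Real.summable_pow_div_factorial (z * y)).mul_right (Real.exp (z * t₀))
      apply h.congr
      intro n
      rw [mul_pow, div_eq_mul_inv]
      ring
    rw [hs1.tsum_smul_const]
    congr 1
    have : ∀ n : ℕ, (y ^ n * ((Nat.factorial n : ℝ))⁻¹) * (z ^ n * Real.exp (z * t₀))
        = ((z * y) ^ n / (Nat.factorial n : ℝ)) * Real.exp (z * t₀) := by
      intro n; rw [mul_pow, div_eq_mul_inv]; ring
    rw [tsum_congr this, tsum_mul_right, ← real_exp_tsum, ← Real.exp_add]
    ring_nf
  have hlast : (∫ z in Ioc (0:ℝ) 1, (∑' n, F n z)) = Lint f (t₀ + y) := by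
    rw [Lint, intervalIntegral.integral_of_le zero_le_one]
    exact setIntegral_congr_fun measurableSet_Ioc htsum
  rw [← funext hterm, ← hlast]
  exact key

lemma hasFPowerSeriesAt_Lint {f : ℝ → E} (hf : Continuous f) (t₀ : ℝ) :
    HasFPowerSeriesAt (Lint f) (Lseries f t₀) t₀ := by
  obtain ⟨C, hC⟩ := (isCompact_Icc (a := (0:ℝ)) (b := 1)).exists_bound_of_continuousOn
    (f := f) hf.continuousOn
  have hC0 : 0 ≤ C := le_trans (norm_nonneg (f 0)) (hC 0 (by norm_num))
  refine ⟨1, ?_, ?_, ?_⟩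
  · -- 1 ≤ radius
    have hb : ∀ n : ℕ, ‖Lseries f t₀ n‖ * (1 : ℝ) ^ n ≤ Real.exp |t₀| * C := by
      intro n
      rw [one_pow, mul_one]
      have h1 : ‖Lseries f t₀ n‖
          = ‖((Nat.factorial n : ℝ))⁻¹ • Lint (fun z => z ^ n • f z) t₀‖ :=
        ContinuousMultilinearMap.norm_mkPiRing _
      rw [h1, norm_smul, Real.norm_eq_abs,
        abs_of_nonneg (by positivity : (0:ℝ) ≤ ((Nat.factorial n : ℝ))⁻¹)]
      have h2 : ‖Lint (fun z => z ^ n • f z) t₀‖ ≤ Real.exp |t₀| * C := by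
        apply norm_Lint_le ((continuous_pow n).smul hf)
        intro z hz
        show ‖z ^ n • f z‖ ≤ C
        rw [norm_smul, Real.norm_eq_abs, abs_pow]
        have : |z| ^ n ≤ 1 := pow_le_one₀ (abs_nonneg z) (abs_le.2 ⟨by linarith [hz.1], hz.2⟩)
        nlinarith [norm_nonneg (f z), hC z hz]
      have h3 : ((Nat.factorial n : ℝ))⁻¹ ≤ 1 := by
        rw [inv_le_one_iff₀]
        right
        exact_mod_cast Nat.one_le_iff_ne_zero.2 (Nat.factorial_ne_zero n)
      nlinarith [norm_nonneg (Lint (fun z => z ^ n • f z) t₀), Real.exp_pos |t₀|]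
    have := FormalMultilinearSeries.le_radius_of_bound (Lseries f t₀) (Real.exp |t₀| * C)
      (r := 1) (fun n => by simpa using hb n)
    simpa using this
  · exact one_pos
  · intro y _
    have h := hasSum_Lint hf t₀ y
    have heq : ∀ n : ℕ, (Lseries f t₀ n fun _ => y)
        = (y ^ n * ((Nat.factorial n : ℝ))⁻¹) • Lint (fun z => z ^ n • f z) t₀ := by
      intro n
      rw [Lseries, ContinuousMultilinearMap.mkPiRing_apply]
      rw [Finset.prod_const, Finset.card_univ, Fintype.card_fin, smul_smul]
    rw [funext heq]
    exact h

lemma analyticAt_Lint {f : ℝ → E} (hf : Continuous f) (t₀ : ℝ) :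
    AnalyticAt ℝ (Lint f) t₀ := ⟨_, hasFPowerSeriesAt_Lint hf t₀⟩

lemma hasDerivAt_Lint {f : ℝ → E} (hf : Continuous f) (t : ℝ) :
    HasDerivAt (Lint f) (Lint (fun z => z • f z) t) t := by
  have h := (hasFPowerSeriesAt_Lint hf t).hasStrictDerivAt.hasDerivAt
  have hcoeff : ((Lseries f t 1) fun _ => (1:ℝ)) = Lint (fun z => z • f z) t := by
    rw [Lseries, ContinuousMultilinearMap.mkPiRing_apply]
    have hfz : (fun z : ℝ => z ^ 1 • f z) = fun z => z • f z := by
      funext z; rw [pow_one]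
    simp [hfz]
  rwa [hcoeff] at h

def Hfun : ℝ → ℝ := Lint (fun _ => (1:ℝ))
def Mfun : ℝ → ℝ := Lint (fun z => z)
def M2fun : ℝ → ℝ := Lint (fun z => z ^ 2)

lemma Hfun_eq (t : ℝ) : Hfun t = ∫ z in (0:ℝ)..1, Real.exp (z * t) := by
  rw [Hfun, Lint]; simp

lemma Mfun_eq (t : ℝ) : Mfun t = ∫ z in (0:ℝ)..1, Real.exp (z * t) * z := by
  rw [Mfun, Lint]; simp [smul_eq_mul]

lemma M2fun_eq (t : ℝ) : M2fun t = ∫ z in (0:ℝ)..1, Real.exp (z * t) * z ^ 2 := by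
  rw [M2fun, Lint]; simp [smul_eq_mul]

lemma cont_ezt (t : ℝ) : Continuous fun z : ℝ => Real.exp (z * t) :=
  Real.continuous_exp.comp (continuous_id.mul continuous_const)

lemma cont_eztz (t : ℝ) : Continuous fun z : ℝ => Real.exp (z * t) * z :=
  (cont_ezt t).mul continuous_id

lemma cont_eztz2 (t : ℝ) : Continuous fun z : ℝ => Real.exp (z * t) * z ^ 2 :=
  (cont_ezt t).mul (continuous_pow 2)

lemma Hfun_val {t : ℝ} (ht : t ≠ 0) : Hfun t = (Real.exp t - 1) / t := by
  rw [Hfun_eq]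
  have hd : ∀ z ∈ uIcc (0:ℝ) 1, HasDerivAt (fun z => Real.exp (z * t) / t)
      (Real.exp (z * t)) z := by
    intro z _
    have h2 := ((hasDerivAt_id z).mul_const t).exp.div_const t
    refine h2.congr_deriv ?_
    simp only [id]
    field_simp
  rw [intervalIntegral.integral_eq_sub_of_hasDerivAt hd ((cont_ezt t).intervalIntegrable 0 1)]
  simp [Real.exp_zero]
  ring

lemma Mfun_val {t : ℝ} (ht : t ≠ 0) : Mfun t = ((t - 1) * Real.exp t + 1) / t ^ 2 := by
  rw [Mfun_eq]
  have hd : ∀ z ∈ uIcc (0:ℝ) 1, HasDerivAt (fun z => (t * z - 1) * Real.exp (z * t) / t ^ 2)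
      (Real.exp (z * t) * z) z := by
    intro z _
    have h1 : HasDerivAt (fun z : ℝ => t * z - 1) t z := by
      simpa using ((hasDerivAt_id z).const_mul t).sub_const 1
    have h2 := ((hasDerivAt_id z).mul_const t).exp
    have h3 := (h1.mul h2).div_const (t ^ 2)
    refine h3.congr_deriv ?_
    simp only [id]
    field_simp
    ring
  rw [intervalIntegral.integral_eq_sub_of_hasDerivAt hd
    ((cont_eztz t).intervalIntegrable 0 1)]
  simp [Real.exp_zero]
  ring

lemma M2fun_val {t : ℝ} (ht : t ≠ 0) :
    M2fun t = ((t ^ 2 - 2 * t + 2) * Real.exp t - 2) / t ^ 3 := by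
  rw [M2fun_eq]
  have hd : ∀ z ∈ uIcc (0:ℝ) 1,
      HasDerivAt (fun z => (t ^ 2 * z ^ 2 - 2 * t * z + 2) * Real.exp (z * t) / t ^ 3)
      (Real.exp (z * t) * z ^ 2) z := by
    intro z _
    have h1 : HasDerivAt (fun z : ℝ => t ^ 2 * z ^ 2 - 2 * t * z + 2)
        (t ^ 2 * (2 * z) - 2 * t) z := by
      have := (((hasDerivAt_pow 2 z).const_mul (t ^ 2)).sub
        ((hasDerivAt_id z).const_mul (2 * t))).add_const 2
      refine this.congr_deriv ?_
      simp only [Nat.reduceSub, pow_one, Nat.cast_ofNat]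
      ring
    have h2 := ((hasDerivAt_id z).mul_const t).exp
    have h3 := (h1.mul h2).div_const (t ^ 3)
    refine h3.congr_deriv ?_
    simp only [id]
    field_simp
    ring
  rw [intervalIntegral.integral_eq_sub_of_hasDerivAt hd
    ((cont_eztz2 t).intervalIntegrable 0 1)]
  simp [Real.exp_zero]
  ring

lemma Hfun_zero : Hfun 0 = 1 := by
  rw [Hfun_eq]; simp

lemma Mfun_zero : Mfun 0 = 1 / 2 := by
  rw [Mfun_eq]; simp [integral_id]

lemma M2fun_zero : M2fun 0 = 1 / 3 := by
  rw [M2fun_eq]; simp [integral_pow]; norm_num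

lemma Hfun_pos (t : ℝ) : 0 < Hfun t := by
  rw [Hfun_eq]
  exact intervalIntegral.intervalIntegral_pos_of_pos_on ((cont_ezt t).intervalIntegrable 0 1)
    (fun z _ => Real.exp_pos _) one_pos

lemma Mfun_pos (t : ℝ) : 0 < Mfun t := by
  rw [Mfun_eq]
  exact intervalIntegral.intervalIntegral_pos_of_pos_on ((cont_eztz t).intervalIntegrable 0 1)
    (fun z hz => mul_pos (Real.exp_pos _) hz.1) one_pos

lemma Mfun_lt_Hfun (t : ℝ) : Mfun t < Hfun t := by
  have key : 0 < ∫ z in (0:ℝ)..1, (Real.exp (z * t) - Real.exp (z * t) * z) := by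
    apply intervalIntegral.intervalIntegral_pos_of_pos_on
      (((cont_ezt t).sub (cont_eztz t)).intervalIntegrable 0 1)
      (fun z hz => ?_) one_pos
    have := Real.exp_pos (z * t)
    show 0 < Real.exp (z * t) - Real.exp (z * t) * z
    nlinarith [hz.1, hz.2]
  rw [intervalIntegral.integral_sub ((cont_ezt t).intervalIntegrable 0 1)
    ((cont_eztz t).intervalIntegrable 0 1)] at key
  rw [Mfun_eq, Hfun_eq]
  linarith

lemma exp_ne_one {t : ℝ} (ht : t ≠ 0) : Real.exp t ≠ 1 := fun h => ht ((Real.exp_eq_one_iff _).1 h)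

lemma toddMu_eq (t : ℝ) : toddMu t = Mfun t / Hfun t := by
  rcases eq_or_ne t 0 with rfl | ht
  · rw [toddMu, if_pos rfl, Mfun_zero, Hfun_zero]
    norm_num
  · rw [toddMu, if_neg ht, Hfun_val ht, Mfun_val ht]
    have he1 : Real.exp t - 1 ≠ 0 := sub_ne_zero.2 (exp_ne_one ht)
    have he2 : 1 - Real.exp (-t) ≠ 0 := fun h => (neg_ne_zero.2 ht)
      ((Real.exp_eq_one_iff _).1 (by linarith [h] : Real.exp (-t) = 1))
    have he3 : Real.exp t ≠ 0 := Real.exp_ne_zero t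
    rw [Real.exp_neg] at he2 ⊢
    field_simp
    ring

lemma analyticAt_Hfun (t : ℝ) : AnalyticAt ℝ Hfun t := analyticAt_Lint continuous_const t
lemma analyticAt_Mfun (t : ℝ) : AnalyticAt ℝ Mfun t := analyticAt_Lint continuous_id t
lemma analyticAt_M2fun (t : ℝ) : AnalyticAt ℝ M2fun t := analyticAt_Lint (continuous_pow 2) t

lemma toddMu_funext : toddMu = fun t => Mfun t / Hfun t := funext toddMu_eq

lemma analyticAt_toddMu (t : ℝ) : AnalyticAt ℝ toddMu t := by
  rw [toddMu_funext]
  exact (analyticAt_Mfun t).div (analyticAt_Hfun t) (Hfun_pos t).ne'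

lemma hasDerivAt_Hfun (t : ℝ) : HasDerivAt Hfun (Mfun t) t := by
  have h := hasDerivAt_Lint (f := fun _ : ℝ => (1:ℝ)) continuous_const t
  rw [show (fun z : ℝ => z • (1:ℝ)) = fun z : ℝ => z from funext fun z => by simp] at h
  exact h

lemma hasDerivAt_Mfun (t : ℝ) : HasDerivAt Mfun (M2fun t) t := by
  have h := hasDerivAt_Lint (f := fun z : ℝ => z) continuous_id t
  rw [show (fun z : ℝ => z • z) = fun z : ℝ => z ^ 2 from
    funext fun z => by rw [smul_eq_mul, sq]] at h
  exact h

/-- The derivative of `toddMu`. -/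
def dtodd (t : ℝ) : ℝ := (M2fun t * Hfun t - Mfun t * Mfun t) / Hfun t ^ 2

lemma hasDerivAt_toddMu (t : ℝ) : HasDerivAt toddMu (dtodd t) t := by
  rw [toddMu_funext, dtodd]
  exact (hasDerivAt_Mfun t).div (hasDerivAt_Hfun t) (Hfun_pos t).ne'

lemma analyticAt_dtodd (t : ℝ) : AnalyticAt ℝ dtodd t := by
  apply AnalyticAt.div
  · exact ((analyticAt_M2fun t).mul (analyticAt_Hfun t)).sub
      ((analyticAt_Mfun t).mul (analyticAt_Mfun t))
  · exact (analyticAt_Hfun t).pow 2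
  · exact pow_ne_zero 2 (Hfun_pos t).ne'

lemma sinh_sq_gt {u : ℝ} (hu : u ≠ 0) : u ^ 2 < Real.sinh u ^ 2 := by
  have h1 : |u| < |Real.sinh u| := by
    rw [Real.abs_sinh]
    exact Real.self_lt_sinh_iff.2 (abs_pos.2 hu)
  calc u ^ 2 = |u| ^ 2 := (sq_abs u).symm
    _ < |Real.sinh u| ^ 2 := by
        apply pow_lt_pow_left₀ h1 (abs_nonneg u)
        norm_num
    _ = Real.sinh u ^ 2 := sq_abs _

lemma key_exp_ineq {t : ℝ} (ht : t ≠ 0) :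
    0 < Real.exp (2 * t) - (t ^ 2 + 2) * Real.exp t + 1 := by
  have hu : t / 2 ≠ 0 := div_ne_zero ht two_ne_zero
  have h1 : (t / 2) ^ 2 < Real.sinh (t / 2) ^ 2 := sinh_sq_gt hu
  have hcosh : Real.cosh t = 2 * Real.sinh (t / 2) ^ 2 + 1 := by
    have h2 : Real.cosh (2 * (t / 2)) = Real.cosh (t / 2) ^ 2 + Real.sinh (t / 2) ^ 2 :=
      Real.cosh_two_mul _
    have h3 : Real.cosh (t / 2) ^ 2 = Real.sinh (t / 2) ^ 2 + 1 := Real.cosh_sq _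
    rw [show t = 2 * (t / 2) by ring, h2, h3]
    ring
  have hch : Real.exp t + Real.exp (-t) = 2 * Real.cosh t := by
    rw [Real.cosh_eq]; ring
  have hgt : t ^ 2 + 2 < Real.exp t + Real.exp (-t) := by
    rw [hch, hcosh]
    nlinarith [h1]
  have hprod : Real.exp t * Real.exp (-t) = 1 := by
    rw [← Real.exp_add]; simp
  have h2t : Real.exp (2 * t) = Real.exp t * Real.exp t := by
    rw [← Real.exp_add]; ring_nf
  nlinarith [Real.exp_pos t, hgt, hprod, h2t]

lemma dtodd_pos (t : ℝ) : 0 < dtodd t := by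
  rw [dtodd]
  apply div_pos _ (pow_pos (Hfun_pos t) 2)
  rcases eq_or_ne t 0 with rfl | ht
  · rw [Hfun_zero, Mfun_zero, M2fun_zero]; norm_num
  · have hN : M2fun t * Hfun t - Mfun t * Mfun t
        = (Real.exp (2 * t) - (t ^ 2 + 2) * Real.exp t + 1) / t ^ 4 := by
      rw [M2fun_val ht, Hfun_val ht, Mfun_val ht,
        show Real.exp (2 * t) = Real.exp t * Real.exp t by rw [← Real.exp_add]; ring_nf]
      field_simp
      ring
    rw [hN]
    exact div_pos (key_exp_ineq ht) (by positivity)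

lemma strictMono_toddMu : StrictMono toddMu :=
  strictMono_of_deriv_pos fun t => by
    rw [(hasDerivAt_toddMu t).deriv]; exact dtodd_pos t

lemma toddMu_mem_Ioo (t : ℝ) : toddMu t ∈ Ioo (0:ℝ) 1 := by
  rw [toddMu_eq]
  constructor
  · exact div_pos (Mfun_pos t) (Hfun_pos t)
  · exact (div_lt_one (Hfun_pos t)).2 (Mfun_lt_Hfun t)

lemma tendsto_toddMu_atBot : Tendsto toddMu atBot (𝓝 0) := by
  have hform : ∀ t : ℝ, t ≠ 0 → toddMu t = -(Real.exp (-t) - 1)⁻¹ - t⁻¹ := by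
    intro t ht
    rw [toddMu, if_neg ht, one_div, one_div,
      show (1 - Real.exp (-t)) = -(Real.exp (-t) - 1) by ring, inv_neg]
  have h1 : Tendsto (fun t : ℝ => Real.exp (-t) - 1) atBot atTop := by
    apply tendsto_atTop_add_const_right
    exact Real.tendsto_exp_atTop.comp tendsto_neg_atBot_atTop
  have h2 : Tendsto (fun t : ℝ => -(Real.exp (-t) - 1)⁻¹) atBot (𝓝 0) := by
    simpa using (h1.inv_tendsto_atTop).neg
  have h3 : Tendsto (fun t : ℝ => t⁻¹) atBot (𝓝 0) := by
    have := (tendsto_inv_atTop_zero (𝕜 := ℝ)).comp tendsto_neg_atBot_atTop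
    have h4 : Tendsto (fun t : ℝ => -(-t)⁻¹) atBot (𝓝 0) := by simpa using this.neg
    apply h4.congr
    intro t; rw [inv_neg, neg_neg]
  have := h2.sub h3
  rw [sub_zero] at this
  apply this.congr'
  filter_upwards [eventually_lt_atBot (0:ℝ)] with t ht
  exact (hform t ht.ne).symm

lemma tendsto_toddMu_atTop : Tendsto toddMu atTop (𝓝 1) := by
  have h1 : Tendsto (fun t : ℝ => 1 - Real.exp (-t)) atTop (𝓝 1) := by
    have := Real.tendsto_exp_atBot.comp (tendsto_neg_atTop_atBot (G := ℝ))
    simpa using (tendsto_const_nhds (x := (1:ℝ)) (f := atTop)).sub this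
  have h2 : Tendsto (fun t : ℝ => (1 - Real.exp (-t))⁻¹) atTop (𝓝 1) := by
    have := h1.inv₀ one_ne_zero
    simpa using this
  have h3 : Tendsto (fun t : ℝ => (1 - Real.exp (-t))⁻¹ - t⁻¹) atTop (𝓝 1) := by
    have := h2.sub (tendsto_inv_atTop_zero (𝕜 := ℝ))
    simpa using this
  apply h3.congr'
  filter_upwards [eventually_gt_atTop (0:ℝ)] with t ht
  rw [toddMu, if_neg ht.ne', one_div, one_div]

section Tau

variable {tau : ℝ → ℝ}

lemma tau_lt_iff (htau₂ : ∀ x ∈ Set.Ioo (0:ℝ) 1, toddMu (tau x) = x)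
    {x b : ℝ} (hx : x ∈ Ioo (0:ℝ) 1) : tau x < b ↔ x < toddMu b := by
  rw [← strictMono_toddMu.lt_iff_lt, htau₂ x hx]

lemma lt_tau_iff (htau₂ : ∀ x ∈ Set.Ioo (0:ℝ) 1, toddMu (tau x) = x)
    {x b : ℝ} (hx : x ∈ Ioo (0:ℝ) 1) : b < tau x ↔ toddMu b < x := by
  rw [← strictMono_toddMu.lt_iff_lt, htau₂ x hx]

lemma continuousAt_tau (htau₂ : ∀ x ∈ Set.Ioo (0:ℝ) 1, toddMu (tau x) = x)
    {x : ℝ} (hx : x ∈ Ioo (0:ℝ) 1) : ContinuousAt tau x := by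
  rw [ContinuousAt, tendsto_order]
  constructor
  · intro b hb
    have hb' : toddMu b < x := (lt_tau_iff htau₂ hx).1 hb
    filter_upwards [isOpen_Ioo.mem_nhds hx, Ioi_mem_nhds hb'] with y hy hby
    exact (lt_tau_iff htau₂ hy).2 hby
  · intro b hb
    have hb' : x < toddMu b := (tau_lt_iff htau₂ hx).1 hb
    filter_upwards [isOpen_Ioo.mem_nhds hx, Iio_mem_nhds hb'] with y hy hby
    exact (tau_lt_iff htau₂ hy).2 hby

lemma hasDerivAt_tau (htau₂ : ∀ x ∈ Set.Ioo (0:ℝ) 1, toddMu (tau x) = x)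
    {x : ℝ} (hx : x ∈ Ioo (0:ℝ) 1) : HasDerivAt tau (dtodd (tau x))⁻¹ x := by
  apply HasDerivAt.of_local_left_inverse (continuousAt_tau htau₂ hx)
    (hasDerivAt_toddMu (tau x)) (dtodd_pos (tau x)).ne'
  filter_upwards [isOpen_Ioo.mem_nhds hx] with y hy using htau₂ y hy

lemma analyticAt_tau (htau₂ : ∀ x ∈ Set.Ioo (0:ℝ) 1, toddMu (tau x) = x)
    {x : ℝ} (hx : x ∈ Ioo (0:ℝ) 1) : AnalyticAt ℝ tau x := by
  set t := tau x with htdef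
  have hxt : toddMu t = x := htau₂ x hx
  -- strict derivative of toddMu at t
  have hcd : ContDiffAt ℝ 1 toddMu t := (analyticAt_toddMu t).contDiffAt.of_le le_top
  have hst : HasStrictDerivAt toddMu (dtodd t) t := by
    have h := hcd.hasStrictDerivAt one_ne_zero
    rwa [(hasDerivAt_toddMu t).deriv] at h
  have hne : dtodd t ≠ 0 := (dtodd_pos t).ne'
  have hstf := hst.hasStrictFDerivAt_equiv hne
  set PH := hstf.toOpenPartialHomeomorph toddMu with hPH
  have hsrc : t ∈ PH.source := hstf.mem_toOpenPartialHomeomorph_source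
  have hcoe : (PH : ℝ → ℝ) = toddMu := hstf.toOpenPartialHomeomorph_coe
  have htgt : x ∈ PH.target := by
    have := PH.map_source hsrc
    rwa [show PH t = x by rw [← hxt]; exact congrFun hcoe t ▸ rfl] at this
  -- power series of toddMu at t
  obtain ⟨p, hp⟩ := analyticAt_toddMu t
  have hp1 : p 1 = (continuousMultilinearCurryFin1 ℝ ℝ ℝ).symm
      (ContinuousLinearEquiv.unitsEquivAut ℝ (Units.mk0 (dtodd t) hne)) := by
    have hc : p.coeff 1 = dtodd t := by
      have h := hp.deriv
      rw [(hasDerivAt_toddMu t).deriv] at h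
      exact h.symm
    rw [← p.mkPiRing_coeff_eq 1, hc]
    ext m
    simp [ContinuousLinearEquiv.unitsEquivAut, mul_comm]
  have hpPH : HasFPowerSeriesAt PH p t := by
    apply hp.congr
    filter_upwards with y using (congrFun hcoe y).symm
  have hsymm := PH.hasFPowerSeriesAt_symm hsrc hpPH hp1
  have hPHt : PH t = x := by rw [← hxt]; exact congrFun hcoe t ▸ rfl
  rw [hPHt] at hsymm
  have hana : AnalyticAt ℝ PH.symm x := ⟨_, hsymm⟩
  apply hana.congr
  filter_upwards [isOpen_Ioo.mem_nhds hx, PH.open_target.mem_nhds htgt] with y hy hyt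
  have h1 : toddMu (PH.symm y) = y := by
    have := PH.right_inv hyt
    rwa [← congrFun hcoe (PH.symm y)]
  have h2 : toddMu (tau y) = y := htau₂ y hy
  exact strictMono_toddMu.injective (h1.trans h2.symm)

lemma analyticOnNhd_tau (htau₂ : ∀ x ∈ Set.Ioo (0:ℝ) 1, toddMu (tau x) = x) :
    AnalyticOnNhd ℝ tau (Ioo (0:ℝ) 1) := fun _ hx => analyticAt_tau htau₂ hx

lemma deriv_tau_eq (htau₂ : ∀ x ∈ Set.Ioo (0:ℝ) 1, toddMu (tau x) = x)
    {x : ℝ} (hx : x ∈ Ioo (0:ℝ) 1) : deriv tau x = (dtodd (tau x))⁻¹ :=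
  (hasDerivAt_tau htau₂ hx).deriv

lemma contDiffOn_deriv_tau (htau₂ : ∀ x ∈ Set.Ioo (0:ℝ) 1, toddMu (tau x) = x) :
    ContDiffOn ℝ (⊤ : ℕ∞) (deriv tau) (Ioo (0:ℝ) 1) := by
  have hana : AnalyticOnNhd ℝ (fun x => (dtodd (tau x))⁻¹) (Ioo (0:ℝ) 1) := fun x hx =>
    (((analyticAt_dtodd (tau x)).comp (analyticAt_tau htau₂ hx)).inv (dtodd_pos (tau x)).ne')
  exact (hana.contDiffOn_of_completeSpace (n := (⊤ : ℕ∞))).congr fun x hx => deriv_tau_eq htau₂ hx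

lemma tendsto_tau_zero (htau₂ : ∀ x ∈ Set.Ioo (0:ℝ) 1, toddMu (tau x) = x) :
    Tendsto tau (𝓝[Ioo (0:ℝ) 1] 0) atBot := by
  rw [tendsto_atBot]
  intro b
  have h0 : (0:ℝ) < toddMu b := (toddMu_mem_Ioo b).1
  filter_upwards [self_mem_nhdsWithin, mem_nhdsWithin_of_mem_nhds (Iio_mem_nhds h0)] with y hy h2
  exact le_of_lt ((tau_lt_iff htau₂ hy).2 h2)

lemma tendsto_tau_one (htau₂ : ∀ x ∈ Set.Ioo (0:ℝ) 1, toddMu (tau x) = x) :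
    Tendsto tau (𝓝[Ioo (0:ℝ) 1] 1) atTop := by
  rw [tendsto_atTop]
  intro b
  have h0 : toddMu b < 1 := (toddMu_mem_Ioo b).2
  filter_upwards [self_mem_nhdsWithin, mem_nhdsWithin_of_mem_nhds (Ioi_mem_nhds h0)] with y hy h2
  exact le_of_lt ((lt_tau_iff htau₂ hy).2 h2)

end Tau

lemma rho_eq (tau : ℝ → ℝ) (z x : ℝ) :
    rhoFun tau z x = Real.exp (z * tau x) / Hfun (tau x) := by
  rcases eq_or_ne (tau x) 0 with h | h
  · rw [rhoFun, if_pos h, h, Hfun_zero]; simp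
  · rw [rhoFun, if_neg h, Hfun_val h, div_div_eq_mul_div]

lemma rho_nonneg (tau : ℝ → ℝ) (z x : ℝ) : 0 ≤ rhoFun tau z x := by
  rw [rho_eq]
  exact div_nonneg (Real.exp_pos _).le (Hfun_pos _).le

lemma rho_cont (tau : ℝ → ℝ) (x : ℝ) : Continuous fun z => rhoFun tau z x := by
  have : (fun z => rhoFun tau z x) = fun z => Real.exp (z * tau x) / Hfun (tau x) :=
    funext fun z => rho_eq tau z x
  rw [this]
  exact (cont_ezt (tau x)).div_const _

lemma integral_toddMeas (tau : ℝ → ℝ) {x : ℝ} (hx0 : x ≠ 0) (hx1 : x ≠ 1) (g : ℝ → E) :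
    ∫ z, g z ∂(toddMeas tau x) = ∫ z in (0:ℝ)..1, rhoFun tau z x • g z := by
  rw [toddMeas, if_neg hx0, if_neg hx1]
  have hmeas : Measurable fun z => Real.toNNReal (rhoFun tau z x) :=
    (rho_cont tau x).measurable.real_toNNReal
  have hofreal : (fun z => ENNReal.ofReal (rhoFun tau z x))
      = fun z => (((rhoFun tau z x).toNNReal) : ℝ≥0∞) := rfl
  rw [hofreal, integral_withDensity_eq_integral_smul hmeas]
  rw [intervalIntegral.integral_of_le zero_le_one, ← integral_Icc_eq_integral_Ioc]
  apply setIntegral_congr_fun measurableSet_Icc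
  intro z _
  show (rhoFun tau z x).toNNReal • g z = rhoFun tau z x • g z
  rw [NNReal.smul_def, Real.coe_toNNReal _ (rho_nonneg tau z x)]

lemma int_rho (tau : ℝ → ℝ) (x : ℝ) : (∫ z in (0:ℝ)..1, rhoFun tau z x) = 1 := by
  have h : (fun z => rhoFun tau z x) = fun z => Real.exp (z * tau x) * (Hfun (tau x))⁻¹ :=
    funext fun z => by rw [rho_eq, div_eq_mul_inv]
  rw [h, intervalIntegral.integral_mul_const, ← Hfun_eq]
  exact mul_inv_cancel₀ (Hfun_pos (tau x)).ne'

lemma int_z_rho (tau : ℝ → ℝ) (x : ℝ) :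
    (∫ z in (0:ℝ)..1, rhoFun tau z x • z) = toddMu (tau x) := by
  have h : (fun z => rhoFun tau z x • z) = fun z => (Real.exp (z * tau x) * z) * (Hfun (tau x))⁻¹ :=
    funext fun z => by rw [smul_eq_mul, rho_eq, div_eq_mul_inv]; ring
  rw [h, intervalIntegral.integral_mul_const, ← Mfun_eq, toddMu_eq, div_eq_mul_inv]

section Gfun

/-- `Gfun f t = (H t)⁻¹ • ∫_0^1 e^{zt} • f z dz`. -/
def Gfun (f : ℝ → ℂ) (t : ℝ) : ℂ := (Hfun t)⁻¹ • Lint f t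

lemma analyticAt_Gfun {f : ℝ → ℂ} (hf : Continuous f) (t : ℝ) : AnalyticAt ℝ (Gfun f) t :=
  ((analyticAt_Hfun t).inv (Hfun_pos t).ne').smul (analyticAt_Lint hf t)

lemma hasDerivAt_Gfun {f : ℝ → ℂ} (hf : Continuous f) (t : ℝ) :
    HasDerivAt (Gfun f)
      ((Hfun t)⁻¹ • Lint (fun z => z • f z) t + (-Mfun t / Hfun t ^ 2) • Lint f t) t :=
  HasDerivAt.smul ((hasDerivAt_Hfun t).inv (Hfun_pos t).ne') (hasDerivAt_Lint hf t)

lemma Lint_sub_const {f : ℝ → ℂ} (hf : Continuous f) (t : ℝ) (c : ℂ) :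
    Lint (fun z => f z - c) t = Lint f t - Hfun t • c := by
  rw [Lint, Lint, Hfun_eq]
  have h1 : (fun z => Real.exp (z * t) • (f z - c))
      = fun z => Real.exp (z * t) • f z - Real.exp (z * t) • c := by
    funext z; rw [smul_sub]
  rw [h1, intervalIntegral.integral_sub ((continuous_exp_smul hf t).intervalIntegrable 0 1)
    ((continuous_exp_smul continuous_const t).intervalIntegrable 0 1),
    intervalIntegral.integral_smul_const]

lemma Gfun_sub_const {f : ℝ → ℂ} (hf : Continuous f) (t : ℝ) (c : ℂ) :
    Gfun f t - c = (Hfun t)⁻¹ • Lint (fun z => f z - c) t := by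
  rw [Lint_sub_const hf t c, smul_sub, Gfun, smul_smul,
    inv_mul_cancel₀ (Hfun_pos t).ne', one_smul]

lemma norm_Gfun_sub_le {f : ℝ → ℂ} (hf : Continuous f) (t : ℝ) (c : ℂ) {e K : ℝ}
    (he : 0 ≤ e) (hK : 0 ≤ K) (hb : ∀ z ∈ Icc (0:ℝ) 1, ‖f z - c‖ ≤ e + K * z) :
    ‖Gfun f t - c‖ ≤ e + K * toddMu t := by
  rw [Gfun_sub_const hf t c, norm_smul, Real.norm_eq_abs,
    abs_of_nonneg (inv_nonneg.2 (Hfun_pos t).le)]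
  have h1 : ‖Lint (fun z => f z - c) t‖
      ≤ ∫ z in (0:ℝ)..1, Real.exp (z * t) * (e + K * z) := by
    refine (intervalIntegral.norm_integral_le_integral_norm zero_le_one).trans ?_
    apply intervalIntegral.integral_mono_on zero_le_one
    · exact ((continuous_exp_smul (hf.sub continuous_const) t).norm).intervalIntegrable 0 1
    · exact (((cont_ezt t)).mul (continuous_const.add
        (continuous_const.mul continuous_id))).intervalIntegrable 0 1
    · intro z hz
      rw [norm_smul, Real.norm_eq_abs, Real.abs_exp]
      exact mul_le_mul_of_nonneg_left (hb z hz) (Real.exp_pos _).le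
  have h2 : (∫ z in (0:ℝ)..1, Real.exp (z * t) * (e + K * z))
      = e * Hfun t + K * Mfun t := by
    have h3 : (fun z => Real.exp (z * t) * (e + K * z))
        = fun z => e * Real.exp (z * t) + K * (Real.exp (z * t) * z) := by
      funext z; ring
    rw [h3, intervalIntegral.integral_add (f := fun z => e * Real.exp (z * t))
      (g := fun z => K * (Real.exp (z * t) * z)) ((continuous_const.mul (cont_ezt t)).intervalIntegrable 0 1)
      ((continuous_const.mul (cont_eztz t)).intervalIntegrable 0 1),
      intervalIntegral.integral_const_mul, intervalIntegral.integral_const_mul,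
      ← Hfun_eq, ← Mfun_eq]
  have h4 := mul_le_mul_of_nonneg_left (h1.trans_eq h2) (inv_nonneg.2 (Hfun_pos t).le)
  refine h4.trans ?_
  rw [toddMu_eq]
  have hH := Hfun_pos t
  rw [mul_add, div_eq_mul_inv]
  have : (Hfun t)⁻¹ * (e * Hfun t) = e := by field_simp
  rw [this]
  have : (Hfun t)⁻¹ * (K * Mfun t) = K * (Mfun t * (Hfun t)⁻¹) := by ring
  rw [this]

lemma tendsto_Gfun_atBot {f : ℝ → ℂ} (hf : Continuous f) :
    Tendsto (Gfun f) atBot (𝓝 (f 0)) := by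
  rw [Metric.tendsto_nhds]
  intro ε hε
  obtain ⟨δ, hδ, hδf⟩ := Metric.continuousAt_iff.1 hf.continuousAt (ε / 2) (by linarith)
  obtain ⟨C, hC⟩ := (isCompact_Icc (a := (0:ℝ)) (b := 1)).exists_bound_of_continuousOn
    (f := fun z => f z - f 0) (hf.sub continuous_const).continuousOn
  have hC0 : 0 ≤ C := le_trans (norm_nonneg _) (hC 0 (by norm_num))
  set K := C / δ with hKdef
  have hK0 : 0 ≤ K := div_nonneg hC0 hδ.le
  have hb : ∀ z ∈ Icc (0:ℝ) 1, ‖f z - f 0‖ ≤ ε / 2 + K * z := by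
    intro z hz
    by_cases hzδ : z < δ
    · have : dist (f z) (f 0) < ε / 2 := hδf (by
        rw [Real.dist_eq, sub_zero, abs_of_nonneg hz.1]
        exact hzδ)
      rw [← dist_eq_norm]
      nlinarith [mul_nonneg hK0 hz.1]
    · push_neg at hzδ
      have h1 : ‖f z - f 0‖ ≤ C := hC z hz
      have h2 : C = K * δ := by rw [hKdef]; field_simp
      have h3 : K * δ ≤ K * z := mul_le_mul_of_nonneg_left hzδ hK0
      linarith
  have hbound : ∀ᶠ t in atBot, ‖Gfun f t - f 0‖ ≤ ε / 2 + K * toddMu t :=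
    Filter.Eventually.of_forall fun t => norm_Gfun_sub_le hf t (f 0) (by linarith) hK0 hb
  have hsmall : ∀ᶠ t in atBot, K * toddMu t < ε / 2 := by
    have hlim : Tendsto (fun t => K * toddMu t) atBot (𝓝 (K * 0)) :=
      tendsto_toddMu_atBot.const_mul K
    rw [mul_zero] at hlim
    exact hlim.eventually_lt_const (by linarith)
  filter_upwards [hbound, hsmall] with t h1 h2
  rw [dist_eq_norm]
  linarith

lemma norm_Gfun_sub_le' {f : ℝ → ℂ} (hf : Continuous f) (t : ℝ) (c : ℂ) {e K : ℝ}
    (he : 0 ≤ e) (hK : 0 ≤ K) (hb : ∀ z ∈ Icc (0:ℝ) 1, ‖f z - c‖ ≤ e + K * (1 - z)) :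
    ‖Gfun f t - c‖ ≤ e + K * (1 - toddMu t) := by
  rw [Gfun_sub_const hf t c, norm_smul, Real.norm_eq_abs,
    abs_of_nonneg (inv_nonneg.2 (Hfun_pos t).le)]
  have h1 : ‖Lint (fun z => f z - c) t‖
      ≤ ∫ z in (0:ℝ)..1, Real.exp (z * t) * (e + K * (1 - z)) := by
    refine (intervalIntegral.norm_integral_le_integral_norm zero_le_one).trans ?_
    apply intervalIntegral.integral_mono_on zero_le_one
    · exact ((continuous_exp_smul (hf.sub continuous_const) t).norm).intervalIntegrable 0 1
    · exact (((cont_ezt t)).mul (continuous_const.add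
        (continuous_const.mul (continuous_const.sub continuous_id)))).intervalIntegrable 0 1
    · intro z hz
      rw [norm_smul, Real.norm_eq_abs, Real.abs_exp]
      exact mul_le_mul_of_nonneg_left (hb z hz) (Real.exp_pos _).le
  have h2 : (∫ z in (0:ℝ)..1, Real.exp (z * t) * (e + K * (1 - z)))
      = (e + K) * Hfun t - K * Mfun t := by
    have h3 : (fun z => Real.exp (z * t) * (e + K * (1 - z)))
        = fun z => (e + K) * Real.exp (z * t) - K * (Real.exp (z * t) * z) := by
      funext z; ring
    rw [h3, intervalIntegral.integral_sub (f := fun z => (e + K) * Real.exp (z * t))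
      (g := fun z => K * (Real.exp (z * t) * z)) ((continuous_const.mul (cont_ezt t)).intervalIntegrable 0 1)
      ((continuous_const.mul (cont_eztz t)).intervalIntegrable 0 1),
      intervalIntegral.integral_const_mul, intervalIntegral.integral_const_mul,
      ← Hfun_eq, ← Mfun_eq]
  have h4 := mul_le_mul_of_nonneg_left (h1.trans_eq h2) (inv_nonneg.2 (Hfun_pos t).le)
  refine h4.trans ?_
  rw [toddMu_eq]
  have hH := Hfun_pos t
  rw [div_eq_mul_inv]
  have : (Hfun t)⁻¹ * ((e + K) * Hfun t - K * Mfun t)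
      = e + K * (1 - Mfun t * (Hfun t)⁻¹) := by field_simp; ring
  rw [this]

lemma tendsto_Gfun_atTop {f : ℝ → ℂ} (hf : Continuous f) :
    Tendsto (Gfun f) atTop (𝓝 (f 1)) := by
  rw [Metric.tendsto_nhds]
  intro ε hε
  obtain ⟨δ, hδ, hδf⟩ := Metric.continuousAt_iff.1 (hf.continuousAt (x := 1)) (ε / 2) (by linarith)
  obtain ⟨C, hC⟩ := (isCompact_Icc (a := (0:ℝ)) (b := 1)).exists_bound_of_continuousOn
    (f := fun z => f z - f 1) (hf.sub continuous_const).continuousOn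
  have hC0 : 0 ≤ C := le_trans (norm_nonneg _) (hC 0 (by norm_num))
  set K := C / δ with hKdef
  have hK0 : 0 ≤ K := div_nonneg hC0 hδ.le
  have hb : ∀ z ∈ Icc (0:ℝ) 1, ‖f z - f 1‖ ≤ ε / 2 + K * (1 - z) := by
    intro z hz
    by_cases hzδ : 1 - z < δ
    · have : dist (f z) (f 1) < ε / 2 := hδf (by
        rw [Real.dist_eq, abs_of_nonpos (by linarith [hz.2])]
        linarith)
      rw [← dist_eq_norm]
      nlinarith [mul_nonneg hK0 (by linarith [hz.2] : (0:ℝ) ≤ 1 - z)]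
    · push_neg at hzδ
      have h1 : ‖f z - f 1‖ ≤ C := hC z hz
      have h2 : C = K * δ := by rw [hKdef]; field_simp
      have h3 : K * δ ≤ K * (1 - z) := mul_le_mul_of_nonneg_left hzδ hK0
      linarith
  have hbound : ∀ᶠ t in atTop, ‖Gfun f t - f 1‖ ≤ ε / 2 + K * (1 - toddMu t) :=
    Filter.Eventually.of_forall fun t => norm_Gfun_sub_le' hf t (f 1) (by linarith) hK0 hb
  have hsmall : ∀ᶠ t in atTop, K * (1 - toddMu t) < ε / 2 := by
    have hlim : Tendsto (fun t => K * (1 - toddMu t)) atTop (𝓝 (K * (1 - 1))) :=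
      (tendsto_const_nhds.sub tendsto_toddMu_atTop).const_mul K
    rw [sub_self, mul_zero] at hlim
    exact hlim.eventually_lt_const (by linarith)
  filter_upwards [hbound, hsmall] with t h1 h2
  rw [dist_eq_norm]
  linarith

end Gfun

section Main

lemma toddMeas_prob (tau : ℝ → ℝ) {x : ℝ} (hx : x ∈ Icc (0:ℝ) 1) :
    IsProbabilityMeasure (toddMeas tau x) := by
  rcases eq_or_ne x 0 with rfl | hx0
  · rw [toddMeas, if_pos rfl]; infer_instance
  rcases eq_or_ne x 1 with rfl | hx1
  · rw [toddMeas, if_neg one_ne_zero, if_pos rfl]; infer_instance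
  constructor
  rw [toddMeas, if_neg hx0, if_neg hx1, withDensity_apply _ MeasurableSet.univ,
    Measure.restrict_univ]
  have hint : Integrable (fun z => rhoFun tau z x) (volume.restrict (Icc (0:ℝ) 1)) :=
    (rho_cont tau x).integrableOn_Icc
  rw [← ofReal_integral_eq_lintegral_ofReal hint
    (Filter.Eventually.of_forall fun z => rho_nonneg tau z x)]
  have : (∫ z in Icc (0:ℝ) 1, rhoFun tau z x) = 1 := by
    rw [integral_Icc_eq_integral_Ioc, ← intervalIntegral.integral_of_le zero_le_one, int_rho]
  rw [this, ENNReal.ofReal_one]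

lemma toddMeas_compl (tau : ℝ → ℝ) {x : ℝ} (hx : x ∈ Icc (0:ℝ) 1) :
    toddMeas tau x (Icc (0:ℝ) 1)ᶜ = 0 := by
  have h0 : (0:ℝ) ∈ Icc (0:ℝ) 1 := by norm_num
  have h1 : (1:ℝ) ∈ Icc (0:ℝ) 1 := by norm_num
  rcases eq_or_ne x 0 with rfl | hx0
  · rw [toddMeas, if_pos rfl, Measure.dirac_apply' _ measurableSet_Icc.compl]
    simp [h0]
  rcases eq_or_ne x 1 with rfl | hx1
  · rw [toddMeas, if_neg one_ne_zero, if_pos rfl, Measure.dirac_apply' _ measurableSet_Icc.compl]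
    simp [h1]
  rw [toddMeas, if_neg hx0, if_neg hx1, withDensity_apply _ measurableSet_Icc.compl,
    Measure.restrict_restrict measurableSet_Icc.compl, compl_inter_self,
    Measure.restrict_empty, lintegral_zero_measure]

lemma toddMeas_bary (tau : ℝ → ℝ) (htau₂ : ∀ x ∈ Set.Ioo (0:ℝ) 1, toddMu (tau x) = x)
    {x : ℝ} (hx : x ∈ Icc (0:ℝ) 1) : (∫ z, z ∂(toddMeas tau x)) = x := by
  rcases eq_or_ne x 0 with rfl | hx0
  · rw [toddMeas, if_pos rfl, integral_dirac]
  rcases eq_or_ne x 1 with rfl | hx1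
  · rw [toddMeas, if_neg one_ne_zero, if_pos rfl, integral_dirac]
  have hx' : x ∈ Ioo (0:ℝ) 1 := ⟨lt_of_le_of_ne hx.1 (Ne.symm hx0), lt_of_le_of_ne hx.2 hx1⟩
  rw [integral_toddMeas tau hx0 hx1 (fun z => z), int_z_rho, htau₂ x hx']

lemma Bf_eq_Gfun (tau : ℝ → ℝ) (f fc : ℝ → ℂ) (hfc_eq : ∀ z ∈ Icc (0:ℝ) 1, fc z = f z)
    {x : ℝ} (hx : x ∈ Ioo (0:ℝ) 1) :
    (∫ z, f z ∂(toddMeas tau x)) = Gfun fc (tau x) := by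
  rw [integral_toddMeas tau hx.1.ne' hx.2.ne f]
  have h1 : (∫ z in (0:ℝ)..1, rhoFun tau z x • f z)
      = ∫ z in (0:ℝ)..1, rhoFun tau z x • fc z := by
    apply intervalIntegral.integral_congr
    intro z hz
    rw [uIcc_of_le zero_le_one] at hz
    show rhoFun tau z x • f z = rhoFun tau z x • fc z
    rw [hfc_eq z hz]
  rw [h1]
  have h2 : (fun z => rhoFun tau z x • fc z)
      = fun z => (Hfun (tau x))⁻¹ • (Real.exp (z * tau x) • fc z) := by
    funext z
    rw [rho_eq, div_eq_mul_inv, mul_comm, mul_smul]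
  rw [h2, intervalIntegral.integral_smul, Gfun, Lint]

end Main


end BernsteinAux

/-- The family `x ↦ dB_x` (with density `ρ(·,x)` on `(0,1)` and Dirac
measures at the endpoints) is a Bernstein measure on `[0,1]` with defining matrix (function)
`K(x) = τ'(x)`. -/
theorem toddMeas_isBernsteinMeasure
    (tau : ℝ → ℝ)
    (htau₁ : ∀ t : ℝ, tau (toddMu t) = t)
    (htau₂ : ∀ x ∈ Set.Ioo (0:ℝ) 1, toddMu (tau x) = x) :
    (∀ x ∈ Set.Icc (0:ℝ) 1, IsProbabilityMeasure (toddMeas tau x)) ∧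
    (∀ x ∈ Set.Icc (0:ℝ) 1, toddMeas tau x (Set.Icc (0:ℝ) 1)ᶜ = 0) ∧
    (∀ x ∈ Set.Icc (0:ℝ) 1, (∫ z, z ∂(toddMeas tau x)) = x) ∧
    (∀ f : ℝ → ℂ, ContinuousOn f (Set.Icc (0:ℝ) 1) →
      ContinuousOn (fun x => ∫ z, f z ∂(toddMeas tau x)) (Set.Icc (0:ℝ) 1) ∧
      ContDiffOn ℝ (⊤ : ℕ∞) (fun x => ∫ z, f z ∂(toddMeas tau x)) (Set.Ioo (0:ℝ) 1) ∧
      (∀ x ∈ Set.Ioo (0:ℝ) 1,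
        deriv (fun y => ∫ z, f z ∂(toddMeas tau y)) x
          = ∫ z, f z * ((deriv tau x * (z - x) : ℝ) : ℂ) ∂(toddMeas tau x))) ∧
    ContDiffOn ℝ (⊤ : ℕ∞) (deriv tau) (Set.Ioo (0:ℝ) 1) := by
  refine ⟨fun x hx => toddMeas_prob tau hx, fun x hx => toddMeas_compl tau hx,
    fun x hx => toddMeas_bary tau htau₂ hx, ?_, contDiffOn_deriv_tau htau₂⟩
  intro f hf
  set fc : ℝ → ℂ := Set.IccExtend zero_le_one ((Set.Icc (0:ℝ) 1).restrict f) with hfcdef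
  have hfc : Continuous fc := (ContinuousOn.restrict hf).Icc_extend'
  have hfc_eq : ∀ z ∈ Icc (0:ℝ) 1, fc z = f z := fun z hz => by
    rw [hfcdef, Set.IccExtend_of_mem _ _ hz]
    rfl
  have hfc0 : fc 0 = f 0 := hfc_eq 0 (by norm_num)
  have hfc1 : fc 1 = f 1 := hfc_eq 1 (by norm_num)
  have hBf : ∀ y ∈ Ioo (0:ℝ) 1, (∫ z, f z ∂(toddMeas tau y)) = Gfun fc (tau y) :=
    fun y hy => Bf_eq_Gfun tau f fc hfc_eq hy
  refine ⟨?_, ?_, ?_⟩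
  · -- continuity on [0,1]
    intro x hx
    rcases eq_or_ne x 0 with rfl | hx0
    · have hB0 : (∫ z, f z ∂(toddMeas tau 0)) = f 0 := by
        rw [toddMeas, if_pos rfl, integral_dirac]
      rw [ContinuousWithinAt, hB0]
      have hres : 𝓝[Icc (0:ℝ) 1] (0:ℝ) = 𝓝[Ico (0:ℝ) 1] 0 := by
        rw [nhdsWithin_restrict' _ (Iio_mem_nhds one_pos)]
        congr 1
        ext z
        simp only [mem_inter_iff, mem_Icc, mem_Iio, mem_Ico]
        exact ⟨fun ⟨⟨a, _⟩, c⟩ => ⟨a, c⟩, fun ⟨a, c⟩ => ⟨⟨a, c.le⟩, c⟩⟩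
      rw [hres, ← Set.Ioo_insert_left one_pos, nhdsWithin_insert, Filter.tendsto_sup]
      constructor
      · have h := tendsto_pure_nhds (fun y => ∫ z, f z ∂(toddMeas tau y)) 0
        rwa [hB0] at h
      · have h1 : Tendsto (fun y => Gfun fc (tau y)) (𝓝[Ioo (0:ℝ) 1] 0) (𝓝 (f 0)) := by
          rw [← hfc0]
          exact (tendsto_Gfun_atBot hfc).comp (tendsto_tau_zero htau₂)
        apply h1.congr'
        filter_upwards [self_mem_nhdsWithin] with y hy using (hBf y hy).symm
    rcases eq_or_ne x 1 with rfl | hx1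
    · have hB1 : (∫ z, f z ∂(toddMeas tau 1)) = f 1 := by
        rw [toddMeas, if_neg one_ne_zero, if_pos rfl, integral_dirac]
      rw [ContinuousWithinAt, hB1]
      have hres : 𝓝[Icc (0:ℝ) 1] (1:ℝ) = 𝓝[Ioc (0:ℝ) 1] 1 := by
        rw [nhdsWithin_restrict' _ (Ioi_mem_nhds one_pos)]
        congr 1
        ext z
        simp only [mem_inter_iff, mem_Icc, mem_Ioi, mem_Ioc]
        exact ⟨fun ⟨⟨_, b⟩, c⟩ => ⟨c, b⟩, fun ⟨c, b⟩ => ⟨⟨c.le, b⟩, c⟩⟩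
      rw [hres, ← Set.Ioo_insert_right one_pos, nhdsWithin_insert, Filter.tendsto_sup]
      constructor
      · have h := tendsto_pure_nhds (fun y => ∫ z, f z ∂(toddMeas tau y)) 1
        rwa [hB1] at h
      · have h1 : Tendsto (fun y => Gfun fc (tau y)) (𝓝[Ioo (0:ℝ) 1] 1) (𝓝 (f 1)) := by
          rw [← hfc1]
          exact (tendsto_Gfun_atTop hfc).comp (tendsto_tau_one htau₂)
        apply h1.congr'
        filter_upwards [self_mem_nhdsWithin] with y hy using (hBf y hy).symm
    · have hx' : x ∈ Ioo (0:ℝ) 1 := ⟨hx.1.lt_of_ne' hx0, hx.2.lt_of_ne hx1⟩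
      apply ContinuousAt.continuousWithinAt
      have hca : ContinuousAt (fun y => Gfun fc (tau y)) x :=
        ((analyticAt_Gfun hfc (tau x)).continuousAt).comp (continuousAt_tau htau₂ hx')
      apply hca.congr
      filter_upwards [isOpen_Ioo.mem_nhds hx'] with y hy using (hBf y hy).symm
  · -- smoothness on (0,1)
    have hana : AnalyticOnNhd ℝ (fun y => Gfun fc (tau y)) (Ioo (0:ℝ) 1) := fun y hy =>
      (analyticAt_Gfun hfc (tau y)).comp (analyticAt_tau htau₂ hy)
    exact (hana.contDiffOn_of_completeSpace (n := (⊤ : ℕ∞))).congr fun y hy => hBf y hy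
  · -- the derivative formula
    intro x hx
    have hτ' : deriv tau x = (dtodd (tau x))⁻¹ := deriv_tau_eq htau₂ hx
    have hD : HasDerivAt (fun y => Gfun fc (tau y))
        ((dtodd (tau x))⁻¹ • ((Hfun (tau x))⁻¹ • Lint (fun z => z • fc z) (tau x)
          + (-Mfun (tau x) / Hfun (tau x) ^ 2) • Lint fc (tau x))) x :=
      HasDerivAt.scomp_of_eq (hg := hasDerivAt_Gfun hfc (tau x))
        (hh := hasDerivAt_tau htau₂ hx) (hy := rfl)
    have hev : (fun y => ∫ z, f z ∂(toddMeas tau y)) =ᶠ[𝓝 x] fun y => Gfun fc (tau y) := by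
      filter_upwards [isOpen_Ioo.mem_nhds hx] with y hy using hBf y hy
    rw [hev.deriv_eq, hD.deriv]
    rw [integral_toddMeas tau hx.1.ne' hx.2.ne]
    have hcongr : (∫ z in (0:ℝ)..1, rhoFun tau z x • (f z * ((deriv tau x * (z - x) : ℝ) : ℂ)))
        = ∫ z in (0:ℝ)..1, ((dtodd (tau x))⁻¹ * (Hfun (tau x))⁻¹)
            • (Real.exp (z * tau x) • ((z - x) • fc z)) := by
      apply intervalIntegral.integral_congr
      intro z hz
      rw [uIcc_of_le zero_le_one] at hz
      show rhoFun tau z x • (f z * ((deriv tau x * (z - x) : ℝ) : ℂ))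
          = ((dtodd (tau x))⁻¹ * (Hfun (tau x))⁻¹)
            • (Real.exp (z * tau x) • ((z - x) • fc z))
      rw [← hfc_eq z hz, hτ']
      rw [show fc z * ((((dtodd (tau x))⁻¹ * (z - x) : ℝ)) : ℂ)
          = ((dtodd (tau x))⁻¹ * (z - x)) • fc z by rw [Complex.real_smul, mul_comm]]
      simp only [smul_smul]
      congr 1
      rw [rho_eq, div_eq_mul_inv]
      ring
    rw [hcongr, intervalIntegral.integral_smul]
    have hsplit : (∫ z in (0:ℝ)..1, Real.exp (z * tau x) • ((z - x) • fc z))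
        = Lint (fun z => z • fc z) (tau x) - x • Lint fc (tau x) := by
      rw [Lint, Lint]
      rw [show (fun z => Real.exp (z * tau x) • ((z - x) • fc z))
          = fun z => Real.exp (z * tau x) • (z • fc z) - x • (Real.exp (z * tau x) • fc z) from
        funext fun z => by
          rw [sub_smul, smul_sub, smul_comm (Real.exp (z * tau x)) x]]
      rw [intervalIntegral.integral_sub
        (f := fun z => Real.exp (z * tau x) • (z • fc z))
        (g := fun z => x • (Real.exp (z * tau x) • fc z))
        ((continuous_exp_smul (show Continuous fun z : ℝ => z • fc z from
          continuous_id.smul hfc) (tau x)).intervalIntegrable 0 1)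
        (((continuous_exp_smul hfc (tau x)).const_smul x).intervalIntegrable 0 1),
        intervalIntegral.integral_smul]
    rw [hsplit]
    have hHne := (Hfun_pos (tau x)).ne'
    have hMH : Mfun (tau x) = x * Hfun (tau x) := by
      have h := htau₂ x hx
      rw [toddMu_eq] at h
      exact ((div_eq_iff hHne).1 h)
    have hcan : Hfun (tau x) * (Hfun (tau x))⁻¹ = 1 := mul_inv_cancel₀ hHne
    match_scalars
    · ring
    · rw [hMH]
      field_simp

end
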